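/- arXiv:2603.09139 — 2 statements merged into one kernel-verified Lean document; each statement's English description precedes it below -/
import Mathlib

section
/- Forward Kubelka–Munk equation as Galerkin projection: let σ_a, σ_s ≥ 0, let p be an integrable phase function with ∫_{-1}^{1} p(μ, μ') dμ' = 2 for every μ ∈ [0,1], and let I⁺, I⁻ : ℝ → ℝ be differentiable. Set K = 2σ_a and S = σ_s p̄₋₊. Then for every z, the forward Galerkin residual satisfies ∫_0^1 [ μ (d/dz)(I⁺(z) χ⁺(μ) + I⁻(z) χ⁻(μ)) + (σ_a + σ_s)(I⁺(z) χ⁺(μ) + I⁻(z) χ⁻(μ)) − (σ_s/2) ∫_{-1}^{1} p(μ, μ') (I⁺(z) χ⁺(μ') + I⁻(z) χ⁻(μ')) dμ' ] dμ = (1/2) [ (dI⁺/dz)(z) + (K + S) I⁺(z) − S I⁻(z) ]. In particular, the Galerkin condition (vanishing of this residual) holds at z if and only if dI⁺/dz = −(K + S) I⁺ + S I⁻ at z. -/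
open MeasureTheory Set

/-- The forward hemispherical indicator function: 1 for μ > 0, 0 otherwise. -/
noncomputable def chiPlus : ℝ → ℝ := fun μ => if 0 < μ then 1 else 0

/-- The backward hemispherical indicator function: 1 for μ < 0, 0 otherwise. -/
noncomputable def chiMinus : ℝ → ℝ := fun μ => if μ < 0 then 1 else 0

/-- Backward-to-forward hemispherical moment (backscatter fraction)
p̄₋₊ = ∫₀¹∫₋₁⁰ p(μ,μ') dμ' dμ. -/
noncomputable def pbarMP (p : ℝ → ℝ → ℝ) : ℝ := ∫ μ in (0 : ℝ)..1, ∫ μ' in (-1 : ℝ)..0, p μ μ'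

lemma chiPlus_meas : Measurable chiPlus := by
  unfold chiPlus
  exact Measurable.ite measurableSet_Ioi measurable_const measurable_const

lemma chiMinus_meas : Measurable chiMinus := by
  unfold chiMinus
  exact Measurable.ite measurableSet_Iio measurable_const measurable_const

/-- Forward Kubelka–Munk equation as Galerkin projection: the forward-hemisphere
Galerkin residual of the transport operator applied to the hemispherically
projected intensity I⁺(z) χ⁺ + I⁻(z) χ⁻ equals
(1/2)[dI⁺/dz + (K+S) I⁺ − S I⁻], with K = 2σₐ and S = σₛ p̄₋₊; hence the Galerkin
condition holds at z iff dI⁺/dz = −(K+S) I⁺ + S I⁻ at z. -/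
theorem km_forward_galerkin (σa σs : ℝ) (hσa : 0 ≤ σa) (hσs : 0 ≤ σs)
    (p : ℝ → ℝ → ℝ)
    (hp : IntegrableOn (fun q : ℝ × ℝ => p q.1 q.2) (Icc (-1 : ℝ) 1 ×ˢ Icc (-1 : ℝ) 1))
    (hnorm : ∀ μ ∈ Icc (0 : ℝ) 1, (∫ μ' in (-1 : ℝ)..1, p μ μ') = 2)
    (Iplus Iminus : ℝ → ℝ) (hIp : Differentiable ℝ Iplus) (hIm : Differentiable ℝ Iminus)
    (K S : ℝ) (hK : K = 2 * σa) (hS : S = σs * pbarMP p) :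
    ∀ z : ℝ,
      ((∫ μ in (0 : ℝ)..1,
          (μ * (deriv Iplus z * chiPlus μ + deriv Iminus z * chiMinus μ)
            + (σa + σs) * (Iplus z * chiPlus μ + Iminus z * chiMinus μ)
            - σs / 2 *
              ∫ μ' in (-1 : ℝ)..1,
                p μ μ' * (Iplus z * chiPlus μ' + Iminus z * chiMinus μ'))) =
        1 / 2 * (deriv Iplus z + (K + S) * Iplus z - S * Iminus z)) ∧
      ((∫ μ in (0 : ℝ)..1,
          (μ * (deriv Iplus z * chiPlus μ + deriv Iminus z * chiMinus μ)
            + (σa + σs) * (Iplus z * chiPlus μ + Iminus z * chiMinus μ)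
            - σs / 2 *
              ∫ μ' in (-1 : ℝ)..1,
                p μ μ' * (Iplus z * chiPlus μ' + Iminus z * chiMinus μ'))) = 0 ↔
        deriv Iplus z = -(K + S) * Iplus z + S * Iminus z) := by
  intro z
  set a := deriv Iplus z with ha
  set b := Iplus z with hb
  set c := Iminus z with hc
  set M : ℝ → ℝ := fun μ => ∫ μ' in (-1 : ℝ)..0, p μ μ' with hM
  -- integrability of M on [0,1]
  have hMint : IntervalIntegrable M volume 0 1 := by
    rw [intervalIntegrable_iff_integrableOn_Ioc_of_le (by norm_num)]
    have hp2 : Integrable (fun q : ℝ × ℝ => p q.1 q.2)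
        ((volume.restrict (Ioc (0:ℝ) 1)).prod (volume.restrict (Ioc (-1:ℝ) 0))) := by
      rw [Measure.prod_restrict]
      exact hp.mono_set (Set.prod_mono (Ioc_subset_Icc_self.trans (Icc_subset_Icc (by norm_num) le_rfl)) (Ioc_subset_Icc_self.trans (Icc_subset_Icc le_rfl (by norm_num))))
    have := hp2.integral_prod_left
    have heq : (fun μ => ∫ μ', p μ μ' ∂(volume.restrict (Ioc (-1:ℝ) 0))) = M := by
      funext μ
      rw [hM]
      exact (intervalIntegral.integral_of_le (by norm_num : (-1:ℝ) ≤ 0)).symm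
    rwa [heq] at this
  -- a.e. slice integrability
  have hslice : ∀ᵐ μ ∂(volume.restrict (Ioc (0:ℝ) 1)),
      IntegrableOn (p μ) (Icc (-1:ℝ) 1) := by
    have hp2 : Integrable (fun q : ℝ × ℝ => p q.1 q.2)
        ((volume.restrict (Ioc (0:ℝ) 1)).prod (volume.restrict (Icc (-1:ℝ) 1))) := by
      rw [Measure.prod_restrict]
      exact hp.mono_set (Set.prod_mono (Ioc_subset_Icc_self.trans (Icc_subset_Icc (by norm_num) le_rfl)) subset_rfl)
    exact hp2.prod_right_ae
  -- a.e. rewrite of the integrand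
  have hne0 : ∀ᵐ x : ℝ, x ≠ (0:ℝ) := by
    rw [ae_iff]
    simp only [ne_eq, not_not]
    convert Real.volume_singleton (a := (0:ℝ)) using 2
    ext; simp
  have houter : ∀ᵐ μ ∂(volume.restrict (Ioc (0:ℝ) 1)),
      (μ * (a * chiPlus μ + deriv Iminus z * chiMinus μ)
        + (σa + σs) * (b * chiPlus μ + c * chiMinus μ)
        - σs / 2 * ∫ μ' in (-1 : ℝ)..1, p μ μ' * (b * chiPlus μ' + c * chiMinus μ'))
      = a * μ + σa * b + σs / 2 * (b - c) * M μ := by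
    filter_upwards [hslice, ae_restrict_mem measurableSet_Ioc] with μ hint hμ
    have hμpos : (0:ℝ) < μ := hμ.1
    have hcp : chiPlus μ = 1 := if_pos hμpos
    have hcm : chiMinus μ = 0 := if_neg (not_lt.mpr hμpos.le)
    -- interval integrabilities of slices
    have hi1 : IntervalIntegrable (p μ) volume (-1) 0 := by
      apply IntegrableOn.intervalIntegrable
      apply hint.mono_set
      rw [uIcc_of_le (by norm_num : (-1:ℝ) ≤ 0)]
      exact Icc_subset_Icc le_rfl (by norm_num)
    have hi2 : IntervalIntegrable (p μ) volume 0 1 := by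
      apply IntegrableOn.intervalIntegrable
      apply hint.mono_set
      rw [uIcc_of_le (by norm_num : (0:ℝ) ≤ 1)]
      exact Icc_subset_Icc (by norm_num) le_rfl
    -- integrability of products with the bounded function g
    have hgm : AEStronglyMeasurable (fun μ' => b * chiPlus μ' + c * chiMinus μ') (volume : Measure ℝ) :=
      (((measurable_const.mul chiPlus_meas).add (measurable_const.mul chiMinus_meas))).aestronglyMeasurable
    have hgbd : ∀ x : ℝ, ‖b * chiPlus x + c * chiMinus x‖ ≤ |b| + |c| := by
      intro x
      have h1 : |chiPlus x| ≤ 1 := by unfold chiPlus; split <;> simp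
      have h2 : |chiMinus x| ≤ 1 := by unfold chiMinus; split <;> simp
      calc ‖b * chiPlus x + c * chiMinus x‖
          ≤ |b * chiPlus x| + |c * chiMinus x| := abs_add_le _ _
        _ ≤ |b| * 1 + |c| * 1 := by
            rw [abs_mul, abs_mul]
            gcongr
        _ = |b| + |c| := by ring
    have hprod : ∀ u v : ℝ, IntervalIntegrable (p μ) volume u v →
        IntervalIntegrable (fun μ' => p μ μ' * (b * chiPlus μ' + c * chiMinus μ')) volume u v := by
      intro u v h
      constructor
      · exact (h.1.bdd_mul hgm.restrict (Filter.Eventually.of_forall hgbd)).congr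
          (Filter.Eventually.of_forall fun x => mul_comm _ _)
      · exact (h.2.bdd_mul hgm.restrict (Filter.Eventually.of_forall hgbd)).congr
          (Filter.Eventually.of_forall fun x => mul_comm _ _)
    have hsplit : (∫ μ' in (-1:ℝ)..0, p μ μ' * (b * chiPlus μ' + c * chiMinus μ'))
        + (∫ μ' in (0:ℝ)..1, p μ μ' * (b * chiPlus μ' + c * chiMinus μ'))
        = ∫ μ' in (-1:ℝ)..1, p μ μ' * (b * chiPlus μ' + c * chiMinus μ') :=
      intervalIntegral.integral_add_adjacent_intervals (hprod _ _ hi1) (hprod _ _ hi2)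
    have hleft : (∫ μ' in (-1:ℝ)..0, p μ μ' * (b * chiPlus μ' + c * chiMinus μ'))
        = M μ * c := by
      have : (∫ μ' in (-1:ℝ)..0, p μ μ' * (b * chiPlus μ' + c * chiMinus μ'))
          = ∫ μ' in (-1:ℝ)..0, p μ μ' * c := by
        apply intervalIntegral.integral_congr_ae
        filter_upwards [hne0] with x hx hmem
        rw [uIoc_of_le (by norm_num : (-1:ℝ) ≤ 0)] at hmem
        have hxlt : x < 0 := lt_of_le_of_ne hmem.2 hx
        have h1 : chiPlus x = 0 := if_neg (not_lt.mpr hxlt.le)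
        have h2 : chiMinus x = 1 := if_pos hxlt
        rw [h1, h2]; ring
      rw [this, intervalIntegral.integral_mul_const]
    have hright : (∫ μ' in (0:ℝ)..1, p μ μ' * (b * chiPlus μ' + c * chiMinus μ'))
        = (∫ μ' in (0:ℝ)..1, p μ μ') * b := by
      have : (∫ μ' in (0:ℝ)..1, p μ μ' * (b * chiPlus μ' + c * chiMinus μ'))
          = ∫ μ' in (0:ℝ)..1, p μ μ' * b := by
        apply intervalIntegral.integral_congr_ae
        filter_upwards with x hmem
        rw [uIoc_of_le (by norm_num : (0:ℝ) ≤ 1)] at hmem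
        have h1 : chiPlus x = 1 := if_pos hmem.1
        have h2 : chiMinus x = 0 := if_neg (not_lt.mpr hmem.1.le)
        rw [h1, h2]; ring
      rw [this, intervalIntegral.integral_mul_const]
    have hsum : M μ + (∫ μ' in (0:ℝ)..1, p μ μ') = 2 := by
      have := intervalIntegral.integral_add_adjacent_intervals hi1 hi2
      rw [hnorm μ ⟨hμpos.le, hμ.2⟩] at this
      exact this
    rw [hcp, hcm, ← hsplit, hleft, hright]
    have hP : (∫ μ' in (0:ℝ)..1, p μ μ') = 2 - M μ := by linarith
    rw [hP]; ring
  -- rewrite the outer integral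
  have key : (∫ μ in (0:ℝ)..1,
        (μ * (a * chiPlus μ + deriv Iminus z * chiMinus μ)
          + (σa + σs) * (b * chiPlus μ + c * chiMinus μ)
          - σs / 2 * ∫ μ' in (-1 : ℝ)..1, p μ μ' * (b * chiPlus μ' + c * chiMinus μ')))
      = ∫ μ in (0:ℝ)..1, (a * μ + σa * b + σs / 2 * (b - c) * M μ) := by
    apply intervalIntegral.integral_congr_ae
    have h := (ae_restrict_iff' measurableSet_Ioc).mp houter
    filter_upwards [h] with x hx hmem
    exact hx (by rwa [uIoc_of_le (by norm_num : (0:ℝ) ≤ 1)] at hmem)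
  have hia : IntervalIntegrable (fun μ : ℝ => a * μ) volume 0 1 := by
    apply Continuous.intervalIntegrable; continuity
  have hiab : IntervalIntegrable (fun μ : ℝ => a * μ + σa * b) volume 0 1 :=
    hia.add intervalIntegrable_const
  have haff : (∫ μ in (0:ℝ)..1, (a * μ + σa * b)) = a * (1/2) + σa * b := by
    rw [intervalIntegral.integral_add hia (intervalIntegrable_const),
      intervalIntegral.integral_const_mul,
      integral_id, intervalIntegral.integral_const]
    norm_num
  have hMval : (∫ μ in (0:ℝ)..1, σs / 2 * (b - c) * M μ) = σs / 2 * (b - c) * pbarMP p := by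
    rw [intervalIntegral.integral_const_mul]
    congr 1
  have hval : (∫ μ in (0:ℝ)..1, (a * μ + σa * b + σs / 2 * (b - c) * M μ))
      = a * (1/2) + σa * b + σs / 2 * (b - c) * pbarMP p := by
    rw [intervalIntegral.integral_add hiab (hMint.const_mul _), haff, hMval]
  have h1 : (∫ μ in (0:ℝ)..1,
        (μ * (a * chiPlus μ + deriv Iminus z * chiMinus μ)
          + (σa + σs) * (b * chiPlus μ + c * chiMinus μ)
          - σs / 2 * ∫ μ' in (-1 : ℝ)..1, p μ μ' * (b * chiPlus μ' + c * chiMinus μ')))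
      = 1 / 2 * (a + (K + S) * b - S * c) := by
    rw [key, hval, hK, hS]; ring
  refine ⟨h1, ?_⟩
  constructor
  · intro h
    rw [h1] at h
    linarith [h]
  · intro h
    rw [h1, h]; ring
end

section
/- Backward Kubelka–Munk equation as Galerkin projection: let σ_a, σ_s ≥ 0, let p be an integrable phase function with ∫_{-1}^{1} p(μ, μ') dμ' = 2 for every μ ∈ [-1,1] and with the symmetry p(μ, μ') = p(−μ, −μ'), and let I⁺, I⁻ : ℝ → ℝ be differentiable. Set K = 2σ_a and S = σ_s p̄₋₊. Then for every z, ∫_{-1}^0 [ μ (d/dz)(I⁺(z) χ⁺(μ) + I⁻(z) χ⁻(μ)) + (σ_a + σ_s)(I⁺(z) χ⁺(μ) + I⁻(z) χ⁻(μ)) − (σ_s/2) ∫_{-1}^{1} p(μ, μ') (I⁺(z) χ⁺(μ') + I⁻(z) χ⁻(μ')) dμ' ] dμ = (1/2) [ −(dI⁻/dz)(z) + (K + S) I⁻(z) − S I⁺(z) ]. In particular, the backward Galerkin condition holds at z if and only if dI⁻/dz = (K + S) I⁻ − S I⁺ at z. -/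
open MeasureTheory Set

/-- Backward Kubelka–Munk equation as Galerkin projection: the backward-hemisphere
Galerkin residual of the transport operator applied to the hemispherically
projected intensity I⁺(z) χ⁺ + I⁻(z) χ⁻ equals
(1/2)[−dI⁻/dz + (K+S) I⁻ − S I⁺], with K = 2σₐ and S = σₛ p̄₋₊; hence the backward
Galerkin condition holds at z iff dI⁻/dz = (K+S) I⁻ − S I⁺ at z. -/
theorem km_backward_galerkin (σa σs : ℝ) (hσa : 0 ≤ σa) (hσs : 0 ≤ σs)
    (p : ℝ → ℝ → ℝ)
    (hp : IntegrableOn (fun q : ℝ × ℝ => p q.1 q.2) (Icc (-1 : ℝ) 1 ×ˢ Icc (-1 : ℝ) 1))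
    (hnorm : ∀ μ ∈ Icc (-1 : ℝ) 1, (∫ μ' in (-1 : ℝ)..1, p μ μ') = 2)
    (hsym : ∀ μ ∈ Icc (-1 : ℝ) 1, ∀ μ' ∈ Icc (-1 : ℝ) 1, p μ μ' = p (-μ) (-μ'))
    (Iplus Iminus : ℝ → ℝ) (hIp : Differentiable ℝ Iplus) (hIm : Differentiable ℝ Iminus)
    (K S : ℝ) (hK : K = 2 * σa) (hS : S = σs * pbarMP p) :
    ∀ z : ℝ,
      ((∫ μ in (-1 : ℝ)..0,
          (μ * (deriv Iplus z * chiPlus μ + deriv Iminus z * chiMinus μ)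
            + (σa + σs) * (Iplus z * chiPlus μ + Iminus z * chiMinus μ)
            - σs / 2 *
              ∫ μ' in (-1 : ℝ)..1,
                p μ μ' * (Iplus z * chiPlus μ' + Iminus z * chiMinus μ'))) =
        1 / 2 * (-deriv Iminus z + (K + S) * Iminus z - S * Iplus z)) ∧
      ((∫ μ in (-1 : ℝ)..0,
          (μ * (deriv Iplus z * chiPlus μ + deriv Iminus z * chiMinus μ)
            + (σa + σs) * (Iplus z * chiPlus μ + Iminus z * chiMinus μ)
            - σs / 2 *
              ∫ μ' in (-1 : ℝ)..1,
                p μ μ' * (Iplus z * chiPlus μ' + Iminus z * chiMinus μ'))) = 0 ↔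
        deriv Iminus z = (K + S) * Iminus z - S * Iplus z) := by
  intro z
  set Ip := Iplus z with hIpdef
  set Im := Iminus z with hImdef
  set dIp := deriv Iplus z with hdIpdef
  set dIm := deriv Iminus z with hdImdef
  set A : ℝ → ℝ := fun μ => ∫ μ' in (0 : ℝ)..1, p μ μ' with hAdef
  set B : ℝ → ℝ := fun μ => ∫ μ' in (-1 : ℝ)..0, p μ μ' with hBdef
  -- basic measure fact
  have hne0 : ∀ᵐ x : ℝ ∂volume, x ≠ 0 := by
    rw [ae_iff]; simpa using Real.volume_singleton
  -- slice integrability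
  have hslice : ∀ μ ∈ Icc (-1 : ℝ) 1, IntegrableOn (p μ) (Ioc (-1 : ℝ) 1) := by
    intro μ hμ
    by_contra h
    have h2 := hnorm μ hμ
    rw [intervalIntegral.integral_of_le (by norm_num), integral_undef h] at h2
    norm_num at h2
  have hII1 : ∀ μ ∈ Icc (-1 : ℝ) 1, IntervalIntegrable (p μ) volume (-1) 0 := fun μ hμ =>
    (intervalIntegrable_iff_integrableOn_Ioc_of_le (by norm_num)).mpr
      ((hslice μ hμ).mono_set (Ioc_subset_Ioc le_rfl (by norm_num)))
  have hII2 : ∀ μ ∈ Icc (-1 : ℝ) 1, IntervalIntegrable (p μ) volume 0 1 := fun μ hμ =>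
    (intervalIntegrable_iff_integrableOn_Ioc_of_le (by norm_num)).mpr
      ((hslice μ hμ).mono_set (Ioc_subset_Ioc (by norm_num) le_rfl))
  -- normalization split
  have hAB : ∀ μ ∈ Icc (-1 : ℝ) 1, B μ + A μ = 2 := by
    intro μ hμ
    have := intervalIntegral.integral_add_adjacent_intervals (hII1 μ hμ) (hII2 μ hμ)
    rw [hnorm μ hμ] at this
    exact this
  -- the bounded weight function
  have hcb : ∀ x : ℝ, ‖Ip * chiPlus x + Im * chiMinus x‖ ≤ |Ip| + |Im| := by
    intro x
    have h1 : ‖Ip * chiPlus x‖ ≤ |Ip| := by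
      unfold chiPlus; split_ifs <;> simp [Real.norm_eq_abs, abs_mul, abs_nonneg]
    have h2 : ‖Im * chiMinus x‖ ≤ |Im| := by
      unfold chiMinus; split_ifs <;> simp [Real.norm_eq_abs, abs_mul, abs_nonneg]
    calc ‖Ip * chiPlus x + Im * chiMinus x‖ ≤ ‖Ip * chiPlus x‖ + ‖Im * chiMinus x‖ :=
          norm_add_le _ _
      _ ≤ |Ip| + |Im| := add_le_add h1 h2
  have hcm : Measurable (fun x : ℝ => Ip * chiPlus x + Im * chiMinus x) := by
    unfold chiPlus chiMinus
    exact (measurable_const.mul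
        (Measurable.ite (measurableSet_lt measurable_const measurable_id)
          measurable_const measurable_const)).add
      (measurable_const.mul
        (Measurable.ite (measurableSet_lt measurable_id measurable_const)
          measurable_const measurable_const))
  -- integrability of the inner integrand on pieces
  have hg : ∀ μ ∈ Icc (-1 : ℝ) 1, ∀ s ⊆ Ioc (-1 : ℝ) 1,
      IntegrableOn (fun μ' => p μ μ' * (Ip * chiPlus μ' + Im * chiMinus μ')) s := by
    intro μ hμ s hs
    have h0 : IntegrableOn
        (fun μ' => (Ip * chiPlus μ' + Im * chiMinus μ') * p μ μ') s :=
      Integrable.bdd_mul ((hslice μ hμ).mono_set hs)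
        (hcm.aestronglyMeasurable) (c := |Ip| + |Im|) (ae_of_all _ hcb)
    exact h0.congr (ae_of_all _ fun x => mul_comm _ _)
  -- inner integral decomposition
  have hinner : ∀ μ ∈ Icc (-1 : ℝ) 1,
      (∫ μ' in (-1 : ℝ)..1, p μ μ' * (Ip * chiPlus μ' + Im * chiMinus μ')) =
        Ip * A μ + Im * B μ := by
    intro μ hμ
    have hg1 : IntervalIntegrable
        (fun μ' => p μ μ' * (Ip * chiPlus μ' + Im * chiMinus μ')) volume (-1) 0 :=
      (intervalIntegrable_iff_integrableOn_Ioc_of_le (by norm_num)).mpr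
        (hg μ hμ _ (Ioc_subset_Ioc le_rfl (by norm_num)))
    have hg2 : IntervalIntegrable
        (fun μ' => p μ μ' * (Ip * chiPlus μ' + Im * chiMinus μ')) volume 0 1 :=
      (intervalIntegrable_iff_integrableOn_Ioc_of_le (by norm_num)).mpr
        (hg μ hμ _ (Ioc_subset_Ioc (by norm_num) le_rfl))
    have hsplit := intervalIntegral.integral_add_adjacent_intervals hg1 hg2
    have e1 : (∫ μ' in (-1 : ℝ)..0, p μ μ' * (Ip * chiPlus μ' + Im * chiMinus μ')) =
        Im * B μ := by
      have : (∫ μ' in (-1 : ℝ)..0, p μ μ' * (Ip * chiPlus μ' + Im * chiMinus μ')) =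
          ∫ μ' in (-1 : ℝ)..0, Im * p μ μ' := by
        apply intervalIntegral.integral_congr_ae
        filter_upwards [hne0] with x hx hmem
        rw [uIoc_of_le (by norm_num : (-1 : ℝ) ≤ 0)] at hmem
        have hxlt : x < 0 := lt_of_le_of_ne hmem.2 hx
        simp [chiPlus, chiMinus, hxlt, not_lt.mpr hxlt.le]
        ring
      rw [this, intervalIntegral.integral_const_mul]
    have e2 : (∫ μ' in (0 : ℝ)..1, p μ μ' * (Ip * chiPlus μ' + Im * chiMinus μ')) =
        Ip * A μ := by
      have : (∫ μ' in (0 : ℝ)..1, p μ μ' * (Ip * chiPlus μ' + Im * chiMinus μ')) =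
          ∫ μ' in (0 : ℝ)..1, Ip * p μ μ' := by
        apply intervalIntegral.integral_congr_ae
        apply Filter.Eventually.of_forall
        intro x hmem
        rw [uIoc_of_le (by norm_num : (0 : ℝ) ≤ 1)] at hmem
        have hxgt : 0 < x := hmem.1
        simp [chiPlus, chiMinus, hxgt, not_lt.mpr hxgt.le]
        ring
      rw [this, intervalIntegral.integral_const_mul]
    rw [e1, e2] at hsplit
    rw [← hsplit]; ring
  -- integrability of A and B on [-1,0]
  have hfub : ∀ t : Set ℝ, t ⊆ Icc (-1 : ℝ) 1 →
      IntegrableOn (fun μ => ∫ μ' in t, p μ μ') (Ioc (-1 : ℝ) 0) := by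
    intro t ht
    have h1 : IntegrableOn (fun q : ℝ × ℝ => p q.1 q.2) (Ioc (-1 : ℝ) 0 ×ˢ t) :=
      hp.mono_set (prod_mono (fun x hx => ⟨hx.1.le, by linarith [hx.2]⟩) ht)
    rw [IntegrableOn, Measure.volume_eq_prod, ← Measure.prod_restrict] at h1
    exact h1.integral_prod_left
  have hIA : IntervalIntegrable A volume (-1) 0 := by
    refine (intervalIntegrable_iff_integrableOn_Ioc_of_le (by norm_num)).mpr ?_
    refine (hfub (Ioc 0 1) (fun x hx => ⟨by linarith [hx.1], hx.2⟩)).congr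
      (ae_of_all _ fun μ => ?_)
    rw [hAdef]
    exact (intervalIntegral.integral_of_le (by norm_num)).symm
  have hIB : IntervalIntegrable B volume (-1) 0 := by
    refine (intervalIntegrable_iff_integrableOn_Ioc_of_le (by norm_num)).mpr ?_
    refine (hfub (Ioc (-1) 0) (fun x hx => ⟨hx.1.le, by linarith [hx.2]⟩)).congr
      (ae_of_all _ fun μ => ?_)
    rw [hBdef]
    exact (intervalIntegral.integral_of_le (by norm_num)).symm
  -- symmetry: ∫_{-1}^0 A = pbar
  have hAneg : ∀ μ ∈ Icc (0 : ℝ) 1, A (-μ) = B μ := by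
    intro μ hμ
    have hμ' : μ ∈ Icc (-1 : ℝ) 1 := ⟨by linarith [hμ.1], hμ.2⟩
    have e : (∫ μ' in (0 : ℝ)..1, p (-μ) μ') = ∫ μ' in (0 : ℝ)..1, p μ (-μ') := by
      apply intervalIntegral.integral_congr
      intro x hx
      rw [uIcc_of_le (by norm_num : (0 : ℝ) ≤ 1)] at hx
      have h := hsym μ hμ' (-x) ⟨by linarith [hx.2], by linarith [hx.1]⟩
      rw [neg_neg] at h
      exact h.symm
    show (∫ μ' in (0 : ℝ)..1, p (-μ) μ') = ∫ μ' in (-1 : ℝ)..0, p μ μ'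
    rw [e, intervalIntegral.integral_comp_neg (fun x => p μ x)]
    norm_num
  have hApbar : (∫ μ in (-1 : ℝ)..0, A μ) = pbarMP p := by
    have h1 : (∫ μ in (0 : ℝ)..1, A (-μ)) = ∫ μ in (-1 : ℝ)..0, A μ := by
      rw [intervalIntegral.integral_comp_neg A]
      norm_num
    have h2 : (∫ μ in (0 : ℝ)..1, A (-μ)) = ∫ μ in (0 : ℝ)..1, B μ := by
      apply intervalIntegral.integral_congr
      intro x hx
      rw [uIcc_of_le (by norm_num : (0 : ℝ) ≤ 1)] at hx
      exact hAneg x hx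
    rw [← h1, h2, hBdef, pbarMP]
  have hBint : (∫ μ in (-1 : ℝ)..0, B μ) = 2 - pbarMP p := by
    have h1 : (∫ μ in (-1 : ℝ)..0, B μ) = ∫ μ in (-1 : ℝ)..0, (2 - A μ) := by
      apply intervalIntegral.integral_congr
      intro x hx
      rw [uIcc_of_le (by norm_num : (-1 : ℝ) ≤ 0)] at hx
      have hx' : x ∈ Icc (-1 : ℝ) 1 := ⟨hx.1, by linarith [hx.2]⟩
      have := hAB x hx'
      show B x = 2 - A x
      linarith
    rw [h1, intervalIntegral.integral_sub (intervalIntegrable_const) hIA,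
      intervalIntegral.integral_const, hApbar]
    norm_num
  -- main computation
  have key : (∫ μ in (-1 : ℝ)..0,
      (μ * (dIp * chiPlus μ + dIm * chiMinus μ)
        + (σa + σs) * (Ip * chiPlus μ + Im * chiMinus μ)
        - σs / 2 * ∫ μ' in (-1 : ℝ)..1, p μ μ' * (Ip * chiPlus μ' + Im * chiMinus μ'))) =
      1 / 2 * (-dIm + (K + S) * Im - S * Ip) := by
    have hcongr : (∫ μ in (-1 : ℝ)..0,
        (μ * (dIp * chiPlus μ + dIm * chiMinus μ)
          + (σa + σs) * (Ip * chiPlus μ + Im * chiMinus μ)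
          - σs / 2 * ∫ μ' in (-1 : ℝ)..1, p μ μ' * (Ip * chiPlus μ' + Im * chiMinus μ'))) =
        ∫ μ in (-1 : ℝ)..0,
          ((μ * dIm + (σa + σs) * Im) - σs / 2 * (Ip * A μ + Im * B μ)) := by
      apply intervalIntegral.integral_congr_ae
      filter_upwards [hne0] with x hx hmem
      rw [uIoc_of_le (by norm_num : (-1 : ℝ) ≤ 0)] at hmem
      have hxlt : x < 0 := lt_of_le_of_ne hmem.2 hx
      have hx1 : x ∈ Icc (-1 : ℝ) 1 := ⟨hmem.1.le, by linarith⟩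
      rw [hinner x hx1]
      simp [chiPlus, chiMinus, hxlt, not_lt.mpr hxlt.le]
    rw [hcongr]
    have hi1 : IntervalIntegrable (fun μ : ℝ => μ * dIm + (σa + σs) * Im) volume (-1) 0 :=
      ((continuous_id'.mul continuous_const).add continuous_const).intervalIntegrable _ _
    have hi2 : IntervalIntegrable (fun μ : ℝ => σs / 2 * (Ip * A μ + Im * B μ))
        volume (-1) 0 :=
      (((hIA.const_mul Ip).add (hIB.const_mul Im)).const_mul (σs / 2))
    rw [intervalIntegral.integral_sub hi1 hi2,
      intervalIntegral.integral_add (f := fun μ : ℝ => μ * dIm)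
        ((continuous_id'.mul continuous_const).intervalIntegrable _ _ :
          IntervalIntegrable (fun μ : ℝ => μ * dIm) volume (-1) 0)
        (intervalIntegrable_const),
      intervalIntegral.integral_mul_const, integral_id,
      intervalIntegral.integral_const, intervalIntegral.integral_const_mul,
      intervalIntegral.integral_add (hIA.const_mul Ip) (hIB.const_mul Im),
      intervalIntegral.integral_const_mul, intervalIntegral.integral_const_mul,
      hApbar, hBint, hK, hS]
    simp only [smul_eq_mul]
    ring
  refine ⟨key, ?_⟩
  rw [key]
  constructor
  · intro h; linarith
  · intro h; linarith
end
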